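/- Let f ≥ 1 and let d ∈ D_f ⊆ S_{2f}. Then there exists w ∈ S_{2f} such that d_0 = d w and ℓ(d_0) = ℓ(d) + ℓ(w), where d_0 is the element of S_{2f} with (a)d_0 = (a+1)/2 for odd a and (a)d_0 = 2f+1-a/2 for even a. Equivalently, every element of D_f is ≤ d_0 in the weak right order on S_{2f}. -/

import Mathlib

/-!
0-based conventions in `Equiv.Perm ℕ`; length = #inversions.
`d_0 ∈ S_{2f}` is the permutation with `d0 (2k) = k` and
`d0 (2k+1) = 2f-1-k` for `k < f` (the 0-based version of the paper's
`(a)d_0 = (a+1)/2` for odd `a`, `(a)d_0 = 2f+1-a/2` for even `a`).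
The paper's right-action product `d_0 = d w` is the function `w ∘ d`, i.e.
`w * d` in Mathlib's convention.
-/

noncomputable section

noncomputable def len (σ : Equiv.Perm ℕ) : ℕ :=
  Set.ncard {p : ℕ × ℕ | p.1 < p.2 ∧ σ p.2 < σ p.1}

def Df (f : ℕ) (d : Equiv.Perm ℕ) : Prop :=
  (∀ x, 2 * f ≤ x → d x = x) ∧
  (∀ k, k < f → d (2 * k) < d (2 * k + 1)) ∧
  (∀ k, k + 1 < f → d (2 * k) < d (2 * k + 2))

/-!
If the inversions of `d` are among those of `σ`, the inversions of `σ` split into those of `d`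
and those of `σ * d⁻¹` relabelled by `d`, so `len σ = len d + len (σ * d⁻¹)`. For `d ∈ D_f`
the defining inequalities make `d` increasing on the even positions and put each odd position
above its even neighbour, so in every inversion `i < j` of `d` the position `i` is odd; and `d0`
inverts every such pair, since it sends the odd positions, in reverse order, above the even ones.
-/

namespace Equiv.Perm

def inversions (σ : Perm ℕ) : Set (ℕ × ℕ) :=
  {p | p.1 < p.2 ∧ σ p.2 < σ p.1}

theorem len_eq_ncard_inversions (σ : Perm ℕ) : len σ = σ.inversions.ncard := rfl

theorem apply_lt_of_forall_le_fixed {σ : Perm ℕ} {n : ℕ} (h : ∀ x, n ≤ x → σ x = x)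
    {x : ℕ} (hx : x < n) : σ x < n := by
  by_contra! hσx
  have := σ.injective (h _ hσx)
  omega

theorem snd_lt_of_mem_inversions {σ : Perm ℕ} {n : ℕ} (h : ∀ x, n ≤ x → σ x = x)
    {p : ℕ × ℕ} (hp : p ∈ σ.inversions) : p.2 < n := by
  obtain ⟨hlt, hinv⟩ := hp
  by_contra! hn
  rw [h _ hn] at hinv
  by_cases hi : p.1 < n
  · have := apply_lt_of_forall_le_fixed h hi
    omega
  · rw [h _ (not_lt.mp hi)] at hinv
    omega

theorem inversions_finite {σ : Perm ℕ} {n : ℕ} (h : ∀ x, n ≤ x → σ x = x) :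
    σ.inversions.Finite :=
  ((Set.finite_Iio n).prod (Set.finite_Iio n)).subset fun _ hp =>
    have := snd_lt_of_mem_inversions h hp
    ⟨lt_trans hp.1 this, this⟩

theorem inversions_sdiff_eq_preimage {σ d : Perm ℕ} (hsub : d.inversions ⊆ σ.inversions) :
    σ.inversions \ d.inversions = Equiv.prodCongr d d ⁻¹' (σ * d⁻¹).inversions := by
  ext ⟨i, j⟩
  simp only [inversions, Set.mem_sdiff, Set.mem_ofPred_eq, Set.mem_preimage, prodCongr_apply,
    Prod.map, mul_apply, coe_inv, symm_apply_apply, not_and, not_lt]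
  constructor
  · rintro ⟨⟨hij, hσ⟩, hd⟩
    exact ⟨lt_of_le_of_ne (hd hij) (d.injective.ne hij.ne), hσ⟩
  · rintro ⟨hd, hσ⟩
    have hij : i < j := by
      rcases lt_trichotomy i j with hij | rfl | hji
      · exact hij
      · exact absurd hd (lt_irrefl _)
      · exact absurd (hsub (show (j, i) ∈ d.inversions from ⟨hji, hd⟩)).2 hσ.asymm
    exact ⟨⟨hij, hσ⟩, fun _ => hd.le⟩

theorem len_eq_len_add_len_mul_inv {σ d : Perm ℕ} (hfin : σ.inversions.Finite)
    (hsub : d.inversions ⊆ σ.inversions) : len σ = len d + len (σ * d⁻¹) := by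
  have hcard : (σ.inversions \ d.inversions).ncard = len (σ * d⁻¹) := by
    rw [inversions_sdiff_eq_preimage hsub, len_eq_ncard_inversions,
      Set.ncard_preimage_of_injective_subset_range (Equiv.prodCongr d d).injective
        fun p _ => (Equiv.prodCongr d d).surjective p]
  rw [← hcard, add_comm, len_eq_ncard_inversions, len_eq_ncard_inversions,
    Set.ncard_sdiff_add_ncard_of_subset hsub hfin]

end Equiv.Perm

open Equiv.Perm

theorem Df.apply_two_mul_le {f : ℕ} {d : Equiv.Perm ℕ} (hd : Df f d) {a b : ℕ} (hab : a ≤ b)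
    (hb : b < f) : d (2 * a) ≤ d (2 * b) := by
  induction b, hab using Nat.le_induction with
  | base => exact le_rfl
  | succ b hab ih => exact (ih (by omega)).trans (hd.2.2 b hb).le

theorem Df.inversions_subset {f : ℕ} {d d0 : Equiv.Perm ℕ} (hd : Df f d)
    (he : ∀ k, k < f → d0 (2 * k) = k)
    (ho : ∀ k, k < f → d0 (2 * k + 1) = 2 * f - 1 - k) :
    d.inversions ⊆ d0.inversions := by
  rintro ⟨i, j⟩ hp
  have hj : j < 2 * f := snd_lt_of_mem_inversions hd.1 hp
  obtain ⟨hij, hinv⟩ : i < j ∧ d j < d i := hp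
  refine ⟨hij, show d0 j < d0 i from ?_⟩
  obtain ⟨a, rfl | rfl⟩ := Nat.even_or_odd' i <;> obtain ⟨b, rfl | rfl⟩ := Nat.even_or_odd' j
  · have := hd.apply_two_mul_le (a := a) (b := b) (by omega) (by omega)
    exact absurd hinv this.not_gt
  · have := hd.apply_two_mul_le (a := a) (b := b) (by omega) (by omega)
    have := hd.2.1 b (by omega)
    omega
  · rw [he b (by omega), ho a (by omega)]
    omega
  · rw [ho b (by omega), ho a (by omega)]
    omega

theorem stmt6_general (f : ℕ) (d d0 : Equiv.Perm ℕ) (hd : Df f d)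
    (hfix : ∀ x, 2 * f ≤ x → d0 x = x)
    (he : ∀ k, k < f → d0 (2 * k) = k)
    (ho : ∀ k, k < f → d0 (2 * k + 1) = 2 * f - 1 - k) :
    ∃ w : Equiv.Perm ℕ, (∀ x, 2 * f ≤ x → w x = x) ∧ d0 = w * d ∧
      len d0 = len d + len w := by
  refine ⟨d0 * d⁻¹, fun x hx => ?_, (inv_mul_cancel_right d0 d).symm,
    len_eq_len_add_len_mul_inv (inversions_finite hfix) (hd.inversions_subset he ho)⟩
  rw [mul_apply, inv_eq_iff_eq.mpr (hd.1 x hx).symm, hfix x hx]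

theorem stmt6 (f : ℕ) (hf : 1 ≤ f) (d d0 : Equiv.Perm ℕ) (hd : Df f d)
    (hfix : ∀ x, 2 * f ≤ x → d0 x = x)
    (he : ∀ k, k < f → d0 (2 * k) = k)
    (ho : ∀ k, k < f → d0 (2 * k + 1) = 2 * f - 1 - k) :
    ∃ w : Equiv.Perm ℕ, (∀ x, 2 * f ≤ x → w x = x) ∧ d0 = w * d ∧
      len d0 = len d + len w :=
  stmt6_general f d d0 hd hfix he ho
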